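/- arXiv:1803.07694 — 2 statements merged into one kernel-verified Lean document; each statement's English description precedes it below -/
import Mathlib

section
/- For integers h, c ≥ 1, the graph S̄(h,c) has no h-colouring with clustering c; that is, every assignment of h colours to the vertices of S̄(h,c) yields a monochromatic connected component with more than c vertices. -/
open SimpleGraph

variable {V α : Type*}

/-- The monochromatic subgraph of `G` under the colouring `f`:
edges of `G` whose endpoints get the same colour. -/
def monoSubgraph (G : SimpleGraph V) (f : V → α) : SimpleGraph V where
  Adj u v := G.Adj u v ∧ f u = f v
  symm := ⟨fun _ _ h => ⟨h.1.symm, h.2.symm⟩⟩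
  loopless := ⟨fun _ h => G.irrefl h.1⟩

/-- The colouring `f` has defect `d`: every vertex has at most `d`
neighbours of its own colour. -/
def HasDefect (G : SimpleGraph V) (f : V → α) (d : ℕ) : Prop :=
  ∀ v, {u | G.Adj v u ∧ f u = f v}.ncard ≤ d

/-- The colouring `f` has clustering `c`: every monochromatic connected
component has at most `c` vertices. -/
def HasClustering (G : SimpleGraph V) (f : V → α) (c : ℕ) : Prop :=
  ∀ v, {u | (monoSubgraph G f).Reachable v u}.ncard ≤ c

/-- Vertices of the standard example `S̄(h,c)` (here parametrised by `m = h - 1`):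
internal dominant vertices are lists over `Fin c` of length `< m`, and the
bottom level consists of paths on `c+1` vertices, one for each list of length
exactly `m`. -/
def SBarVert (m c : ℕ) : Type :=
  {l : List (Fin c) // l.length < m} ⊕ ({l : List (Fin c) // l.length = m} × Fin (c + 1))

/-- The standard example `S̄(h,c)` with `m = h - 1`: `S̄(1,c)` is the path on
`c+1` vertices, and for `h ≥ 2`, `S̄(h,c)` is obtained from `c` disjoint copies
of `S̄(h-1,c)` by adding one dominant vertex.  Concretely: internal vertices
are adjacent to all vertices below them (prefix relation), and the bottom
vertices form paths. -/
def stdSBar (m c : ℕ) : SimpleGraph (SBarVert m c) where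
  Adj u v :=
    match u, v with
    | .inl a, .inl b => a ≠ b ∧ (a.1 <+: b.1 ∨ b.1 <+: a.1)
    | .inl a, .inr (l, _) => a.1 <+: l.1
    | .inr (l, _), .inl a => a.1 <+: l.1
    | .inr (l, i), .inr (l', j) => l = l' ∧ ((i : ℕ) + 1 = j ∨ (j : ℕ) + 1 = i)
  symm := by
    constructor
    rintro (a | ⟨l, i⟩) (b | ⟨l', j⟩) h
    · exact ⟨Ne.symm h.1, Or.symm h.2⟩
    · exact h
    · exact h
    · exact ⟨h.1.symm, Or.symm h.2⟩
  loopless := by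
    constructor
    rintro (a | ⟨l, i⟩) h
    · exact h.1 rfl
    · rcases h.2 with h2 | h2 <;> omega

namespace SBarAux

def lst {m c : ℕ} : SBarVert m c → List (Fin c)
  | .inl a => a.1
  | .inr (l, _) => l.1

instance (m c : ℕ) : Finite (SBarVert m c) := by
  have h1 : Finite {l : List (Fin c) // l.length < m} :=
    (List.finite_length_lt (Fin c) m).to_subtype
  have h2 : Finite {l : List (Fin c) // l.length = m} :=
    (List.finite_length_eq (Fin c) m).to_subtype
  unfold SBarVert
  infer_instance

lemma adj_of_prefix {m c : ℕ} (a : {l : List (Fin c) // l.length < m}) (v : SBarVert m c)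
    (h1 : a.1 <+: lst v) (h2 : a.1.length < (lst v).length) :
    (stdSBar m c).Adj (.inl a) v := by
  cases v with
  | inl b =>
      refine ⟨fun he => ?_, Or.inl h1⟩
      subst he
      exact lt_irrefl _ h2
  | inr x =>
      obtain ⟨l, i⟩ := x
      exact h1



lemma key {β : Type*} [DecidableEq β] {c : ℕ} :
    ∀ n, 1 ≤ n → ∀ m (f : SBarVert m c → β) (p : List (Fin c)),
      p.length + n = m + 1 →
      ∀ S : Finset β, S.card ≤ n →
      (∀ v, p <+: lst v → f v ∈ S) →
      ∃ v, c < {u | (monoSubgraph (stdSBar m c) f).Reachable v u}.ncard := by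
  classical
  intro n
  induction n with
  | zero => omega
  | succ n ih =>
    intro _ m f p hp S hS hsub
    rcases Nat.eq_zero_or_pos n with hn0 | hn1
    · -- base case: p.length = m, the bottom path
      subst hn0
      have hpm : p.length = m := by omega
      set pm : {l : List (Fin c) // l.length = m} := ⟨p, hpm⟩ with hpmdef
      have hpref : ∀ i : Fin (c + 1), p <+: lst (Sum.inr (pm, i) : SBarVert m c) :=
        fun i => List.prefix_rfl
      have hcol : ∀ i j : Fin (c + 1),
          f (Sum.inr (pm, i)) = f (Sum.inr (pm, j)) := by
        intro i j
        exact Finset.card_le_one.mp hS _ (hsub _ (hpref i)) _ (hsub _ (hpref j))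
      set v0 : SBarVert m c := Sum.inr (pm, ⟨0, Nat.succ_pos c⟩) with hv0
      have hreach : ∀ k (hk : k < c + 1),
          (monoSubgraph (stdSBar m c) f).Reachable v0 (Sum.inr (pm, ⟨k, hk⟩)) := by
        intro k
        induction k with
        | zero => intro hk; exact Reachable.refl _
        | succ k ihk =>
          intro hk
          have hk' : k < c + 1 := by omega
          refine (ihk hk').trans (Adj.reachable ?_)
          exact (show (stdSBar m c).Adj _ _ ∧ f _ = f _ from ⟨⟨rfl, Or.inl rfl⟩, hcol _ _⟩)
      have hreach' : ∀ i : Fin (c + 1),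
          (monoSubgraph (stdSBar m c) f).Reachable v0 (Sum.inr (pm, i)) := by
        intro i
        have := hreach i.val i.isLt
        simpa using this
      refine ⟨v0, ?_⟩
      have hinj : Function.Injective (fun i : Fin (c + 1) => (Sum.inr (pm, i) : SBarVert m c)) := by
        intro i j hij
        simpa using hij
      set T : Finset (SBarVert m c) :=
        Finset.univ.image (fun i : Fin (c + 1) => (Sum.inr (pm, i) : SBarVert m c)) with hT
      have hTsub : ↑T ⊆ {u | (monoSubgraph (stdSBar m c) f).Reachable v0 u} := by
        intro u hu
        obtain ⟨i, _, rfl⟩ := Finset.mem_image.mp (Finset.mem_coe.mp hu)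
        exact hreach' i
      have himg : T.card = (Finset.univ : Finset (Fin (c + 1))).card :=
        Finset.card_image_of_injective _ hinj
      have hTcard : T.card = c + 1 :=
        himg.trans (Finset.card_univ.trans (Fintype.card_fin _))
      calc c < c + 1 := Nat.lt_succ_self c
        _ = (↑T : Set (SBarVert m c)).ncard := by rw [Set.ncard_coe_finset, hTcard]
        _ ≤ _ := Set.ncard_le_ncard hTsub (Set.toFinite _)
    · -- inductive step
      have hm : p.length < m := by omega
      set root : SBarVert m c := Sum.inl ⟨p, hm⟩ with hroot
      have hα : f root ∈ S := hsub root List.prefix_rfl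
      by_cases hcase : ∀ i : Fin c, ∃ u : SBarVert m c, (p ++ [i]) <+: lst u ∧ f u = f root
      · choose u hu1 hu2 using hcase
        have hlen : ∀ i, p.length + 1 ≤ (lst (u i)).length := by
          intro i
          have := (hu1 i).length_le
          simpa using this
        have hadj : ∀ i, (stdSBar m c).Adj root (u i) := by
          intro i
          refine adj_of_prefix _ _ ((List.prefix_append p [i]).trans (hu1 i)) ?_
          have := hlen i
          simpa using by omega
        have hinj : Function.Injective u := by
          intro i j hij
          have h1 := hu1 i
          rw [hij] at h1
          have h2 := hu1 j
          have := List.prefix_of_prefix_length_le h1 h2 (by simp)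
          have heq : p ++ [i] = p ++ [j] := this.eq_of_length (by simp)
          simpa using heq
        have hne : ∀ i, u i ≠ root := by
          intro i hui
          have := hlen i
          rw [hui] at this
          simp only [hroot, lst] at this
          omega
        set T : Finset (SBarVert m c) := insert root (Finset.univ.image u) with hT
        have hTcard : T.card = c + 1 := by
          have himg : (Finset.univ.image u).card = (Finset.univ : Finset (Fin c)).card :=
            Finset.card_image_of_injective _ hinj
          have hnotmem : root ∉ Finset.univ.image u := by
            simp only [Finset.mem_image, Finset.mem_univ, true_and]
            rintro ⟨i, hi⟩
            exact hne i hi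
          have h1 : T.card = (Finset.univ.image u).card + 1 :=
            Finset.card_insert_of_notMem hnotmem
          rw [h1, himg, Finset.card_univ, Fintype.card_fin]
        have hTsub : ↑T ⊆ {u' | (monoSubgraph (stdSBar m c) f).Reachable root u'} := by
          intro w hw
          simp only [hT, Finset.coe_insert, Set.mem_insert_iff, Finset.coe_image,
            Finset.coe_univ, Set.image_univ, Set.mem_range] at hw
          rcases hw with rfl | ⟨i, rfl⟩
          · exact Reachable.refl _
          · exact Adj.reachable (show (stdSBar m c).Adj _ _ ∧ f _ = f _ from ⟨hadj i, (hu2 i).symm⟩)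
        refine ⟨root, ?_⟩
        calc c < c + 1 := Nat.lt_succ_self c
          _ = (↑T : Set (SBarVert m c)).ncard := by rw [Set.ncard_coe_finset, hTcard]
          _ ≤ _ := Set.ncard_le_ncard hTsub (Set.toFinite _)
      · push_neg at hcase
        obtain ⟨i, hi⟩ := hcase
        refine ih hn1 m f (p ++ [i]) (by simp; omega) (S.erase (f root)) ?_ ?_
        · have := Finset.card_erase_of_mem hα
          omega
        · intro v hv
          exact Finset.mem_erase.mpr
            ⟨hi v hv, hsub v ((List.prefix_append p [i]).trans hv)⟩

end SBarAux

/-- **Lemma 2 (StandardClustering).** For `h, c ≥ 1`, the graph `S̄(h,c)` has no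
`h`-colouring with clustering `c`: every `h`-colouring has a monochromatic
connected component with more than `c` vertices. -/
theorem stmt1 (h c : ℕ) (hh : 1 ≤ h) (hc : 1 ≤ c)
    (f : SBarVert (h - 1) c → Fin h) :
    ∃ v, c < {u | (monoSubgraph (stdSBar (h - 1) c) f).Reachable v u}.ncard := by
  exact SBarAux.key h hh (h - 1) f [] (by simp; omega) Finset.univ (by simp)
    (fun v _ => Finset.mem_univ _)
end

section
/- If every non-empty subgraph of a graph G has a k-island of size at most c, then G is (k+1)-choosable with clustering c. -/
open SimpleGraph

variable {V α : Type*}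

/-- `G` is `k`-choosable with defect `d`: for every assignment of lists of at
least `k` colours to the vertices, there is a colouring from the lists with
defect `d`. -/
def ChoosableWithDefect (G : SimpleGraph V) (k d : ℕ) : Prop :=
  ∀ L : V → Finset ℕ, (∀ v, k ≤ (L v).card) →
    ∃ f : V → ℕ, (∀ v, f v ∈ L v) ∧ HasDefect G f d

/-- `G` is `k`-choosable with clustering `c`: for every assignment of lists of
at least `k` colours to the vertices, there is a colouring from the lists with
clustering `c`. -/
def ChoosableWithClustering (G : SimpleGraph V) (k c : ℕ) : Prop :=
  ∀ L : V → Finset ℕ, (∀ v, k ≤ (L v).card) →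
    ∃ f : V → ℕ, (∀ v, f v ∈ L v) ∧ HasClustering G f c

/-- Monochromatic subgraph restricted to a set `A`. -/
def monoOn (G : SimpleGraph V) (f : V → ℕ) (A : Set V) : SimpleGraph V where
  Adj u v := G.Adj u v ∧ f u = f v ∧ u ∈ A ∧ v ∈ A
  symm := ⟨fun _ _ h => ⟨h.1.symm, h.2.1.symm, h.2.2.2, h.2.2.1⟩⟩
  loopless := ⟨fun _ h => G.irrefl h.1⟩

lemma reach_invariant {M : SimpleGraph V} {P : V → Prop}
    (h : ∀ a b, P a → M.Adj a b → P b) :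
    ∀ {v u : V}, P v → M.Reachable v u → P u := by
  intro v u hv hr
  obtain ⟨w⟩ := hr
  revert hv
  induction w with
  | nil => exact fun hv => hv
  | cons hab p ih => exact fun hv => ih (h _ _ hv hab)

lemma key [Fintype V] (G : SimpleGraph V) (k c : ℕ)
    (hyp : ∀ H : G.Subgraph, H.verts.Nonempty →
      ∃ S : Set V, S ⊆ H.verts ∧ S.Nonempty ∧ S.ncard ≤ c ∧
        ∀ v ∈ S, ({u | H.Adj v u} \ S).ncard ≤ k)
    (L : V → Finset ℕ) (hL : ∀ v, k + 1 ≤ (L v).card) :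
    ∀ (n : ℕ) (A : Set V), A.ncard ≤ n →
      ∃ f : V → ℕ, (∀ v ∈ A, f v ∈ L v) ∧
        ∀ v ∈ A, {u | (monoOn G f A).Reachable v u}.ncard ≤ c := by
  intro n
  induction n with
  | zero =>
    intro A hA
    have : A = ∅ := by
      rw [← Set.ncard_eq_zero A.toFinite]; omega
    subst this
    exact ⟨fun _ => 0, fun v hv => absurd hv (by simp), fun v hv => absurd hv (by simp)⟩
  | succ n ih =>
    intro A hA
    rcases A.eq_empty_or_nonempty with rfl | hAne
    · exact ⟨fun _ => 0, fun v hv => absurd hv (by simp), fun v hv => absurd hv (by simp)⟩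
    · obtain ⟨S, hSA, hSne, hSc, hSk⟩ := hyp ((⊤ : G.Subgraph).induce A) hAne
      set A' : Set V := A \ S with hA'
      have hA'card : A'.ncard ≤ n := by
        have hlt : A'.ncard < A.ncard := by
          apply Set.ncard_lt_ncard _ A.toFinite
          obtain ⟨s0, hs0⟩ := hSne
          exact ⟨Set.diff_subset, fun hsub => (hsub (hSA hs0)).2 hs0⟩
        omega
      obtain ⟨f', hf'L, hf'c⟩ := ih A' hA'card
      -- choose a colour for each island vertex avoiding colours of outside neighbours
      have hchoice : ∀ v ∈ S, ∃ x ∈ L v, ∀ u, G.Adj v u → u ∈ A' → f' u ≠ x := by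
        intro v hv
        have hN : ({u | ((⊤ : G.Subgraph).induce A).Adj v u} \ S).ncard ≤ k := hSk v hv
        set N : Set V := {u | ((⊤ : G.Subgraph).induce A).Adj v u} \ S with hNdef
        have hNfin : N.Finite := Set.toFinite N
        set F : Finset ℕ := hNfin.toFinset.image f' with hF
        have hFcard : F.card ≤ k := by
          calc F.card ≤ hNfin.toFinset.card := Finset.card_image_le
            _ = N.ncard := (Set.ncard_eq_toFinset_card N hNfin).symm
            _ ≤ k := hN
        have hns : ¬ (L v ⊆ F) := fun hsub => by
          have := Finset.card_le_card hsub
          have := hL v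
          omega
        obtain ⟨x, hxL, hxF⟩ := Finset.not_subset.mp hns
        refine ⟨x, hxL, fun u hadj hu hfx => hxF ?_⟩
        rw [hF, Finset.mem_image]
        refine ⟨u, ?_, hfx⟩
        rw [Set.Finite.mem_toFinset]
        exact ⟨⟨hSA hv, hu.1, hadj⟩, hu.2⟩
      classical
      choose g hgL hgavoid using hchoice
      set f : V → ℕ := fun v => if h : v ∈ S then g v h else f' v with hfdef
      have hfS : ∀ v (h : v ∈ S), f v = g v h := fun v h => by simp [hfdef, h]
      have hfA' : ∀ v ∈ A', f v = f' v := fun v hv => by simp [hfdef, hv.2]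
      -- no monochromatic edge between S and A'
      have hcross : ∀ v ∈ S, ∀ u ∈ A', G.Adj v u → f u ≠ f v := by
        intro v hv u hu hadj
        rw [hfA' u hu, hfS v hv]
        exact hgavoid v hv u hadj hu
      refine ⟨f, ?_, ?_⟩
      · intro v hv
        by_cases h : v ∈ S
        · rw [hfS v h]; exact hgL v h
        · rw [hfA' v ⟨hv, h⟩]; exact hf'L v ⟨hv, h⟩
      · intro v hv
        by_cases h : v ∈ S
        · -- component stays inside S
          have hsub : {u | (monoOn G f A).Reachable v u} ⊆ S := by
            intro u hu
            refine reach_invariant (M := monoOn G f A) (P := (· ∈ S)) ?_ h hu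
            intro a b ha hab
            by_contra hb
            have hbA' : b ∈ A' := ⟨hab.2.2.2, hb⟩
            exact hcross a ha b hbA' hab.1 hab.2.1.symm
          calc {u | (monoOn G f A).Reachable v u}.ncard ≤ S.ncard :=
                Set.ncard_le_ncard hsub (Set.toFinite S)
            _ ≤ c := hSc
        · -- component stays inside A' and is a component of f' on A'
          have hvA' : v ∈ A' := ⟨hv, h⟩
          have hsub : {u | (monoOn G f A).Reachable v u} ⊆
              {u | (monoOn G f' A').Reachable v u} := by
            intro u hu
            have := reach_invariant
              (M := monoOn G f A)
              (P := fun u => u ∈ A' ∧ (monoOn G f' A').Reachable v u)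
              ?_ ⟨hvA', Reachable.refl v⟩ hu
            · exact this.2
            · intro a b ha hab
              have hbA' : b ∈ A' := by
                refine ⟨hab.2.2.2, fun hbS => ?_⟩
                exact hcross b hbS a ha.1 hab.1.symm hab.2.1
              have hadj' : (monoOn G f' A').Adj a b :=
                ⟨hab.1, by rw [← hfA' a ha.1, ← hfA' b hbA']; exact hab.2.1,
                  ha.1, hbA'⟩
              exact ⟨hbA', ha.2.trans hadj'.reachable⟩
          calc {u | (monoOn G f A).Reachable v u}.ncard
              ≤ {u | (monoOn G f' A').Reachable v u}.ncard :=
                Set.ncard_le_ncard hsub (Set.toFinite _)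
            _ ≤ c := hf'c v hvA'

/-- **Lemma 8 (IslandColouring).** A `k`-island in a graph `H` is a non-empty
set `S` of vertices such that every vertex of `S` has at most `k` neighbours
outside `S`.  If every non-empty subgraph of `G` has a `k`-island of size at
most `c`, then `G` is `(k+1)`-choosable with clustering `c`. -/
theorem stmt4 [Fintype V] (G : SimpleGraph V) (k c : ℕ) (hc : 1 ≤ c)
    (hyp : ∀ H : G.Subgraph, H.verts.Nonempty →
      ∃ S : Set V, S ⊆ H.verts ∧ S.Nonempty ∧ S.ncard ≤ c ∧
        ∀ v ∈ S, ({u | H.Adj v u} \ S).ncard ≤ k) :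
    ChoosableWithClustering G (k + 1) c := by
  intro L hL
  obtain ⟨f, hfL, hfc⟩ := key G k c hyp L hL Set.univ.ncard Set.univ le_rfl
  refine ⟨f, fun v => hfL v (Set.mem_univ v), fun v => ?_⟩
  have : monoSubgraph G f = monoOn G f Set.univ := by
    ext a b
    simp [monoSubgraph, monoOn]
  rw [this]
  exact hfc v (Set.mem_univ v)
end
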